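/- arXiv:1902.10661 — 4 statements merged into one kernel-verified Lean document; each statement's English description precedes it below -/
import Mathlib

section
/- Let G_u and G_v be connected graphs with n_u and n_v vertices respectively, u a vertex of G_u and v a vertex of G_v. If G arises from G_u and G_v by identifying u with v, then W(G) = W(G_u) + W(G_v) + (n_u - 1)·t_{G_v}(v) + (n_v - 1)·t_{G_u}(u). -/
/-- The Wiener index of a graph: the sum of distances over all unordered pairs of vertices. -/
noncomputable def wienerIndex {V : Type*} [Fintype V] (G : SimpleGraph V) : ℕ :=
  (∑ u : V, ∑ v : V, G.dist u v) / 2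

/-- The transmission of a vertex: the sum of distances from it to all other vertices. -/
noncomputable def transmission {V : Type*} [Fintype V] (G : SimpleGraph V) (x : V) : ℕ :=
  ∑ u : V, G.dist x u

/-- The graph obtained from `G` and `H` by identifying the vertex `u` of `G`
with the vertex `w` of `H` (one-point union). -/
def glue {V W : Type*} (G : SimpleGraph V) (H : SimpleGraph W) (u : V) (w : W) :
    SimpleGraph (V ⊕ {x : W // x ≠ w}) :=
  SimpleGraph.fromRel (fun a b =>
    match a, b with
    | Sum.inl a, Sum.inl b => G.Adj a b
    | Sum.inr a, Sum.inr b => H.Adj a.1 b.1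
    | Sum.inl a, Sum.inr b => a = u ∧ H.Adj w b.1
    | _, _ => False)

/-! Sending `a : V` to `(a, v)` and `b : W` to `(u, b)` embeds the one-point union
isometrically into the box product `Gu □ Gv`, whose distance is the sum of the distances in the
factors. Over all pairs of the union, the `V`-coordinate runs through `V` once and through `u`
another `n_v - 1` times, so the `Gu`-part of the distance sum is that of `Gu` plus
`2 (n_v - 1) t(u)`; symmetrically for `Gv`. -/

open Finset SimpleGraph

theorem SimpleGraph.edist_map_le {V V' : Type*} {G : SimpleGraph V} {G' : SimpleGraph V'}
    (f : G →g G') (a b : V) : G'.edist (f a) (f b) ≤ G.edist a b := by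
  by_cases h : G.Reachable a b
  · obtain ⟨p, hp⟩ := h.exists_walk_length_eq_edist
    rw [← hp, ← Walk.length_map f p]
    exact edist_le _
  · rw [edist_eq_top_of_not_reachable h]
    exact le_top

theorem Finset.even_sum_sum_of_symm {α : Type*} (f : α → α → ℕ) (hsymm : ∀ a b, f a b = f b a)
    (hdiag : ∀ a, f a a = 0) (s : Finset α) : Even (∑ a ∈ s, ∑ b ∈ s, f a b) := by
  classical
  induction s using Finset.induction_on with
  | empty => simp
  | insert x s hx ih =>
    have hcol : ∑ a ∈ s, f a x = ∑ a ∈ s, f x a := sum_congr rfl fun a _ => hsymm a x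
    simp only [sum_insert hx, sum_add_distrib, hdiag, hcol]
    obtain ⟨k, hk⟩ := ih
    exact ⟨∑ b ∈ s, f x b + k, by omega⟩

theorem two_mul_wienerIndex {V : Type*} [Fintype V] (G : SimpleGraph V) :
    2 * wienerIndex G = ∑ a, ∑ b, G.dist a b :=
  Nat.two_mul_div_two_of_even <|
    even_sum_sum_of_symm _ (fun _ _ => dist_comm) (fun _ => dist_self) _

theorem Fintype.sum_sum_comp_of_forall_sum_comp {X A M : Type*} [Fintype X] [Fintype A]
    [AddCommMonoid M] {φ : X → A} {c : A} {k : ℕ}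
    (hφ : ∀ g : A → M, ∑ x, g (φ x) = ∑ a, g a + k • g c) (d : A → A → M)
    (hsymm : ∀ a b, d a b = d b a) (hc : d c c = 0) :
    ∑ x, ∑ y, d (φ x) (φ y) = ∑ a, ∑ b, d a b + (2 * k) • ∑ a, d c a := by
  have hcol : ∑ a, d a c = ∑ a, d c a := Finset.sum_congr rfl fun a _ => hsymm a c
  calc ∑ x, ∑ y, d (φ x) (φ y) = ∑ x, (fun a => ∑ b, d a b + k • d a c) (φ x) :=
        Finset.sum_congr rfl fun x _ => hφ (d (φ x))
    _ = ∑ a, (∑ b, d a b + k • d a c) + k • (∑ b, d c b + k • d c c) :=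
        hφ fun a => ∑ b, d a b + k • d a c
    _ = ∑ a, ∑ b, d a b + (2 * k) • ∑ a, d c a := by
        rw [sum_add_distrib, ← smul_sum, hcol, hc, smul_zero, add_zero, mul_nsmul', two_nsmul]
        abel

section glue

variable {V W : Type*} {Gu : SimpleGraph V} {Gv : SimpleGraph W} {u : V} {v : W}

def glueProj (u : V) (v : W) : V ⊕ {x : W // x ≠ v} → V × W :=
  Sum.elim (fun a => (a, v)) (fun b => (u, b.1))

def glueProjHom (Gu : SimpleGraph V) (Gv : SimpleGraph W) (u : V) (v : W) :
    glue Gu Gv u v →g Gu □ Gv where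
  toFun := glueProj u v
  map_rel' := by
    rintro (a | a) (b | b) ⟨-, h | h⟩ <;> simp_all [glueProj, adj_comm]

def glueInl (Gu : SimpleGraph V) (Gv : SimpleGraph W) (u : V) (v : W) :
    Gu →g glue Gu Gv u v where
  toFun := Sum.inl
  map_rel' h := by simp [glue, h, h.ne]

def glueInr [DecidableEq W] (Gu : SimpleGraph V) (Gv : SimpleGraph W) (u : V) (v : W) :
    Gv →g glue Gu Gv u v where
  toFun b := if h : b = v then Sum.inl u else Sum.inr ⟨b, h⟩
  map_rel' {a b} h := by
    by_cases ha : a = v <;> by_cases hb : b = v <;> simp_all [glue, h.ne, adj_comm]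

@[simp]
theorem glueInl_apply (a : V) : glueInl Gu Gv u v a = .inl a := rfl

@[simp]
theorem glueInr_self [DecidableEq W] : glueInr Gu Gv u v v = .inl u := dif_pos rfl

@[simp]
theorem glueInr_coe [DecidableEq W] (b : {x : W // x ≠ v}) : glueInr Gu Gv u v b = .inr b :=
  dif_neg b.2

theorem edist_glue_inl_inr_le (a : V) (b : {x : W // x ≠ v}) :
    (glue Gu Gv u v).edist (.inl a) (.inr b) ≤ Gu.edist a u + Gv.edist v b := by
  classical
  calc (glue Gu Gv u v).edist (.inl a) (.inr b)
      ≤ (glue Gu Gv u v).edist (.inl a) (.inl u) + (glue Gu Gv u v).edist (.inl u) (.inr b) :=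
        SimpleGraph.edist_triangle
    _ ≤ Gu.edist a u + Gv.edist v b := by
        gcongr
        · exact edist_map_le (glueInl Gu Gv u v) a u
        · simpa using edist_map_le (glueInr Gu Gv u v) v b

theorem edist_glue_le (x y : V ⊕ {x : W // x ≠ v}) :
    (glue Gu Gv u v).edist x y ≤
      Gu.edist (glueProj u v x).1 (glueProj u v y).1 +
        Gv.edist (glueProj u v x).2 (glueProj u v y).2 := by
  classical
  rcases x with a | a <;> rcases y with b | b
  · simpa [glueProj] using edist_map_le (glueInl Gu Gv u v) a b
  · simpa [glueProj] using edist_glue_inl_inr_le a b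
  · rw [edist_comm, edist_comm (G := Gu), edist_comm (G := Gv)]
    exact edist_glue_inl_inr_le b a
  · simpa [glueProj] using edist_map_le (glueInr Gu Gv u v) a b

theorem edist_glue (x y : V ⊕ {x : W // x ≠ v}) :
    (glue Gu Gv u v).edist x y =
      Gu.edist (glueProj u v x).1 (glueProj u v y).1 +
        Gv.edist (glueProj u v x).2 (glueProj u v y).2 :=
  (edist_glue_le x y).antisymm <|
    (edist_boxProd _ _).symm.trans_le (edist_map_le (glueProjHom Gu Gv u v) x y)

theorem dist_glue (hGu : Gu.Connected) (hGv : Gv.Connected) (x y : V ⊕ {x : W // x ≠ v}) :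
    (glue Gu Gv u v).dist x y =
      Gu.dist (glueProj u v x).1 (glueProj u v y).1 +
        Gv.dist (glueProj u v x).2 (glueProj u v y).2 := by
  rw [SimpleGraph.dist, edist_glue, ← (hGu _ _).coe_dist_eq_edist, ← (hGv _ _).coe_dist_eq_edist,
    ← Nat.cast_add, ENat.toNat_natCast]

variable {M : Type*} [AddCommMonoid M] [Fintype V] [Fintype W] [DecidableEq W]

theorem sum_glueProj_fst (g : V → M) :
    ∑ x, g (glueProj u v x).1 = ∑ a, g a + (Fintype.card W - 1) • g u := by
  simp [Fintype.sum_sum_type, glueProj, Fintype.card_subtype_compl]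

theorem sum_glueProj_snd [Nonempty V] (g : W → M) :
    ∑ x, g (glueProj u v x).2 = ∑ b, g b + (Fintype.card V - 1) • g v := by
  rw [Fintype.sum_sum_type, Fintype.sum_eq_add_sum_subtype_ne g v]
  simp only [glueProj, Sum.elim_inl, Sum.elim_inr, sum_const, card_univ]
  rw [← Nat.sub_add_cancel Fintype.card_pos, succ_nsmul, Nat.add_sub_cancel]
  abel

end glue

/-- Polansky's lemma: if `G` arises from `G_u` and `G_v` by identifying
`u` with `v`, then `W(G) = W(G_u) + W(G_v) + (n_u - 1) t_{G_v}(v) + (n_v - 1) t_{G_u}(u)`. -/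
theorem wienerIndex_glue {V W : Type*} [Fintype V] [Fintype W] [DecidableEq W]
    (Gu : SimpleGraph V) (Gv : SimpleGraph W)
    (hGu : Gu.Connected) (hGv : Gv.Connected) (u : V) (v : W) :
    wienerIndex (glue Gu Gv u v) =
      wienerIndex Gu + wienerIndex Gv +
        (Fintype.card V - 1) * transmission Gv v +
        (Fintype.card W - 1) * transmission Gu u := by
  have : Nonempty V := hGu.nonempty
  have hsum : ∑ x, ∑ y, (glue Gu Gv u v).dist x y =
      ∑ a, ∑ b, Gu.dist a b + ∑ a, ∑ b, Gv.dist a b +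
        2 * ((Fintype.card W - 1) * transmission Gu u +
          (Fintype.card V - 1) * transmission Gv v) := by
    simp only [dist_glue hGu hGv, sum_add_distrib]
    rw [Fintype.sum_sum_comp_of_forall_sum_comp sum_glueProj_fst Gu.dist
        (fun _ _ => dist_comm) dist_self,
      Fintype.sum_sum_comp_of_forall_sum_comp sum_glueProj_snd Gv.dist
        (fun _ _ => dist_comm) dist_self]
    simp only [transmission, smul_eq_mul]
    ring
  have hW := two_mul_wienerIndex (glue Gu Gv u v)
  have hWu := two_mul_wienerIndex Gu
  have hWv := two_mul_wienerIndex Gv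
  omega
end

section
/- Let G and H be nontrivial connected graphs, u,v ∈ V(G), w ∈ V(H). Let GuH (respectively GvH) be the graph obtained from disjoint copies of G and H by identifying u (respectively v) with w. If t_G(u) < t_G(v), then W(GuH) < W(GvH). -/
open SimpleGraph Sum

section AuxAdj
variable {V W : Type*} (G : SimpleGraph V) (H : SimpleGraph W) (u : V) (w : W)

lemma glue_adj_inl_inl {a b : V} : (glue G H u w).Adj (inl a) (inl b) ↔ G.Adj a b := by
  simp only [glue, fromRel_adj]
  constructor
  · rintro ⟨h, h1 | h1⟩
    · exact h1
    · exact h1.symm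
  · intro h; exact ⟨by simp [h.ne], Or.inl h⟩

lemma glue_adj_inr_inr {a b : {x : W // x ≠ w}} :
    (glue G H u w).Adj (inr a) (inr b) ↔ H.Adj a.1 b.1 := by
  simp only [glue, fromRel_adj]
  constructor
  · rintro ⟨h, h1 | h1⟩
    · exact h1
    · exact h1.symm
  · intro h
    refine ⟨?_, Or.inl h⟩
    simp only [ne_eq, inr.injEq]
    intro hab; exact h.ne (by rw [hab])

lemma glue_adj_inl_inr {a : V} {b : {x : W // x ≠ w}} :
    (glue G H u w).Adj (inl a) (inr b) ↔ a = u ∧ H.Adj w b.1 := by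
  simp only [glue, fromRel_adj]
  constructor
  · rintro ⟨h, h1 | h1⟩
    · exact h1
    · exact h1.elim
  · intro h; exact ⟨by simp, Or.inl h⟩

variable [DecidableEq W]

/-- Canonical map from `W` to the glued vertex set. -/
def iotaFun : W → V ⊕ {x : W // x ≠ w} :=
  fun x => if h : x = w then Sum.inl u else Sum.inr ⟨x, h⟩

lemma iotaFun_w : iotaFun u w w = Sum.inl u := by simp [iotaFun]

lemma iotaFun_ne {x : W} (h : x ≠ w) : iotaFun u w x = Sum.inr ⟨x, h⟩ := by
  simp [iotaFun, h]

def homInl : G →g glue G H u w where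
  toFun := Sum.inl
  map_rel' := fun h => (glue_adj_inl_inl G H u w).2 h

lemma glue_adj_iota {p q : W} (h : H.Adj p q) :
    (glue G H u w).Adj (iotaFun u w p) (iotaFun u w q) := by
  by_cases ha : p = w
  · have hb : q ≠ w := fun hb => h.ne (ha.trans hb.symm)
    rw [ha, iotaFun_w, iotaFun_ne u w hb]
    exact (glue_adj_inl_inr G H u w).2 ⟨rfl, ha ▸ h⟩
  · by_cases hb : q = w
    · rw [hb, iotaFun_w, iotaFun_ne u w ha]
      exact ((glue_adj_inl_inr G H u w).2 ⟨rfl, hb ▸ h.symm⟩).symm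
    · rw [iotaFun_ne u w ha, iotaFun_ne u w hb]
      exact (glue_adj_inr_inr G H u w).2 h

def homIota : H →g glue G H u w where
  toFun := iotaFun u w
  map_rel' := glue_adj_iota G H u w

lemma glue_connected (hG : G.Connected) (hH : H.Connected) :
    (glue G H u w).Connected := by
  rw [connected_iff]
  refine ⟨?_, ⟨Sum.inl u⟩⟩
  have key : ∀ z, (glue G H u w).Reachable (Sum.inl u) z := by
    rintro (a | b)
    · exact (hG.preconnected u a).map (homInl G H u w)
    · have := (hH.preconnected w b.1).map (homIota G H u w)
      have e1 : (homIota G H u w) w = Sum.inl u := iotaFun_w u w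
      have e2 : (homIota G H u w) b.1 = Sum.inr b := by
        rw [show (homIota G H u w) b.1 = iotaFun u w b.1 from rfl, iotaFun_ne u w b.2]
      rwa [e1, e2] at this
  intro x y
  exact (key x).symm.trans (key y)

end AuxAdj

/-- Lipschitz-type bound along a walk. -/
lemma le_add_length_of_walk {α : Type*} {K : SimpleGraph α} (g : α → ℕ)
    (hg : ∀ p q, K.Adj p q → g q ≤ g p + 1) {x y : α} (p : K.Walk x y) :
    g y ≤ g x + p.length := by
  induction p with
  | nil => simp
  | @cons a b c h p ih =>
      have := hg a b h
      simp only [Walk.length_cons]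
      omega

lemma le_add_dist {α : Type*} {K : SimpleGraph α} (g : α → ℕ)
    (hg : ∀ p q, K.Adj p q → g q ≤ g p + 1) {x y : α} (hr : K.Reachable x y) :
    g y ≤ g x + K.dist x y := by
  obtain ⟨p, hp⟩ := hr.exists_walk_length_eq_dist
  rw [← hp]
  exact le_add_length_of_walk g hg p

lemma adj_dist_le_one {α : Type*} {K : SimpleGraph α} {p q : α} (h : K.Adj p q) :
    K.dist p q ≤ 1 := by
  simpa using K.dist_le h.toWalk

lemma dist_succ {α : Type*} {K : SimpleGraph α} (hK : K.Connected) {x p q : α}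
    (h : K.Adj p q) : K.dist x q ≤ K.dist x p + 1 :=
  (hK.dist_triangle (v := p)).trans (by have := adj_dist_le_one h; omega)

section AuxDist
variable {V W : Type*} [DecidableEq W] (G : SimpleGraph V) (H : SimpleGraph W)
  (u : V) (w : W) (hG : G.Connected) (hH : H.Connected)

include hG hH

lemma glue_dist_inl_inl (a b : V) :
    (glue G H u w).dist (inl a) (inl b) = G.dist a b := by
  have hK := glue_connected G H u w hG hH
  refine le_antisymm ?_ ?_
  · have := le_add_dist (fun x : V => (glue G H u w).dist (inl a) (inl x))
      (fun p q h => dist_succ hK ((glue_adj_inl_inl G H u w).2 h)) (hG.preconnected a b)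
    simpa [SimpleGraph.dist_self] using this
  · have := le_add_dist (fun z : V ⊕ {x : W // x ≠ w} => G.dist a (Sum.elim id (fun _ => u) z))
      (?_) (hK.preconnected (inl a) (inl b))
    · simpa [SimpleGraph.dist_self] using this
    · rintro (p | p) (q | q) h
      · exact dist_succ hG ((glue_adj_inl_inl G H u w).1 h)
      · obtain ⟨rfl, -⟩ := (glue_adj_inl_inr G H u w).1 h
        simp
      · obtain ⟨rfl, -⟩ := (glue_adj_inl_inr G H u w).1 h.symm
        simp
      · simp

lemma glue_dist_inr_inr (a b : {x : W // x ≠ w}) :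
    (glue G H u w).dist (inr a) (inr b) = H.dist a.1 b.1 := by
  have hK := glue_connected G H u w hG hH
  have e1 : iotaFun u w a.1 = (inr a : V ⊕ {x : W // x ≠ w}) := by rw [iotaFun_ne u w a.2]
  have e2 : iotaFun u w b.1 = (inr b : V ⊕ {x : W // x ≠ w}) := by rw [iotaFun_ne u w b.2]
  refine le_antisymm ?_ ?_
  · have := le_add_dist
      (fun x : W => (glue G H u w).dist (inr a) (iotaFun u w x))
      (fun p q h => dist_succ hK (glue_adj_iota G H u w h)) (hH.preconnected a.1 b.1)
    simp only [e1, e2, SimpleGraph.dist_self, zero_add] at this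
    exact this
  · have := le_add_dist
      (fun z : V ⊕ {x : W // x ≠ w} => H.dist a.1 (Sum.elim (fun _ => w) Subtype.val z))
      (?_) (hK.preconnected (inr a) (inr b))
    · simpa [SimpleGraph.dist_self] using this
    · rintro (p | p) (q | q) h
      · simp
      · obtain ⟨-, h2⟩ := (glue_adj_inl_inr G H u w).1 h
        exact dist_succ hH h2
      · obtain ⟨-, h2⟩ := (glue_adj_inl_inr G H u w).1 h.symm
        have := dist_succ hH (x := a.1) h2.symm
        simpa using this
      · exact dist_succ hH ((glue_adj_inr_inr G H u w).1 h)

lemma glue_dist_inl_inr (a : V) (b : {x : W // x ≠ w}) :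
    (glue G H u w).dist (inl a) (inr b) = G.dist a u + H.dist w b.1 := by
  have hK := glue_connected G H u w hG hH
  have e2 : iotaFun u w b.1 = (inr b : V ⊕ {x : W // x ≠ w}) := by rw [iotaFun_ne u w b.2]
  refine le_antisymm ?_ ?_
  · have h1 : (glue G H u w).dist (inl a) (inr b) ≤
        (glue G H u w).dist (inl a) (inl u) + (glue G H u w).dist (inl u) (inr b) :=
      hK.dist_triangle
    have h2 := glue_dist_inl_inl G H u w hG hH a u
    have h3 : (glue G H u w).dist (inl u) (inr b) ≤ H.dist w b.1 := by
      have := le_add_dist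
        (fun x : W => (glue G H u w).dist (inl u) (iotaFun u w x))
        (fun p q h => dist_succ hK (glue_adj_iota G H u w h)) (hH.preconnected w b.1)
      simpa [iotaFun_w, e2, SimpleGraph.dist_self] using this
    omega
  · have := le_add_dist
      (fun z : V ⊕ {x : W // x ≠ w} =>
        G.dist a (Sum.elim id (fun _ => u) z) + H.dist w (Sum.elim (fun _ => w) Subtype.val z))
      (?_) (hK.preconnected (inl a) (inr b))
    · simpa [SimpleGraph.dist_self] using this
    · rintro (p | p) (q | q) h
      · have := dist_succ hG (x := a) ((glue_adj_inl_inl G H u w).1 h)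
        simp only [Sum.elim_inl, id_eq, SimpleGraph.dist_self]
        omega
      · obtain ⟨rfl, h2⟩ := (glue_adj_inl_inr G H u w).1 h
        have := adj_dist_le_one h2
        simp only [Sum.elim_inl, Sum.elim_inr, id, SimpleGraph.dist_self]
        omega
      · obtain ⟨rfl, h2⟩ := (glue_adj_inl_inr G H u w).1 h.symm
        simp only [Sum.elim_inl, Sum.elim_inr, id, SimpleGraph.dist_self]
        omega
      · have := dist_succ hH (x := w) ((glue_adj_inr_inr G H u w).1 h)
        simp only [Sum.elim_inr]
        omega

end AuxDist

section AuxSum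
variable {V W : Type*} [Fintype V] [Fintype W] [DecidableEq W]
  (G : SimpleGraph V) (H : SimpleGraph W) (u : V) (w : W)
  (hG : G.Connected) (hH : H.Connected)

include hG hH

lemma glue_sum :
    ∑ x : V ⊕ {x : W // x ≠ w}, ∑ y : V ⊕ {x : W // x ≠ w}, (glue G H u w).dist x y
      = (∑ a : V, ∑ b : V, G.dist a b)
        + 2 * Fintype.card V * (∑ b : {x : W // x ≠ w}, H.dist w b.1)
        + (∑ b : {x : W // x ≠ w}, ∑ c : {x : W // x ≠ w}, H.dist b.1 c.1)
        + 2 * (Fintype.card {x : W // x ≠ w} * transmission G u) := by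
  have hir : ∀ (b : {x : W // x ≠ w}) (a : V),
      (glue G H u w).dist (inr b) (inl a) = G.dist a u + H.dist w b.1 := by
    intro b a
    rw [SimpleGraph.dist_comm, glue_dist_inl_inr G H u w hG hH]
  simp only [Fintype.sum_sum_type, glue_dist_inl_inl G H u w hG hH,
    glue_dist_inl_inr G H u w hG hH, glue_dist_inr_inr G H u w hG hH, hir]
  have h1 : ∀ a : V, ∑ b : {x : W // x ≠ w}, (G.dist a u + H.dist w b.1)
      = Fintype.card {x : W // x ≠ w} * G.dist a u + ∑ b : {x : W // x ≠ w}, H.dist w b.1 := by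
    intro a
    rw [Finset.sum_add_distrib, Finset.sum_const]
    simp [mul_comm]
  have h2 : ∀ b : {x : W // x ≠ w}, ∑ a : V, (G.dist a u + H.dist w b.1)
      = transmission G u + Fintype.card V * H.dist w b.1 := by
    intro b
    rw [Finset.sum_add_distrib, Finset.sum_const]
    have e : ∑ a : V, G.dist a u = transmission G u := by
      unfold transmission
      exact Finset.sum_congr rfl fun a _ => SimpleGraph.dist_comm ..
    simp [e, mul_comm]
  simp only [h1, h2, Finset.sum_add_distrib, Finset.sum_const, Finset.card_univ,
    smul_eq_mul, ← Finset.mul_sum]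
  have : transmission G u = ∑ a : V, G.dist a u := by
    unfold transmission
    exact Finset.sum_congr rfl fun a _ => SimpleGraph.dist_comm ..
  rw [this]
  ring

end AuxSum

/-- Du's lemma: for nontrivial connected graphs `G`, `H` with
`u, v ∈ V(G)`, `w ∈ V(H)`, if `t_G(u) < t_G(v)` then `W(GuH) < W(GvH)`. -/
theorem wienerIndex_glue_lt {V W : Type*} [Fintype V] [Fintype W] [DecidableEq W]
    (G : SimpleGraph V) (H : SimpleGraph W)
    (hG : G.Connected) (hH : H.Connected)
    (hGnt : 1 < Fintype.card V) (hHnt : 1 < Fintype.card W)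
    (u v : V) (w : W) (ht : transmission G u < transmission G v) :
    wienerIndex (glue G H u w) < wienerIndex (glue G H v w) := by
  have hu := glue_sum G H u w hG hH
  have hv := glue_sum G H v w hG hH
  have hm : 0 < Fintype.card {x : W // x ≠ w} := by
    obtain ⟨y, hy⟩ := Fintype.exists_ne_of_one_lt_card hHnt w
    exact Fintype.card_pos_iff.2 ⟨⟨y, hy⟩⟩
  have hmul : Fintype.card {x : W // x ≠ w} * transmission G u
      < Fintype.card {x : W // x ≠ w} * transmission G v :=
    (Nat.mul_lt_mul_left hm).2 ht
  unfold wienerIndex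
  omega
end

section
/- Let G_2 be the broom consisting of a path u_1, ..., u_l on l vertices with m pendant vertices attached to u_l. Then W(G_2) = (l^3 - l)/6 + m^2 + (l-1)·m + m·(l^2 - l)/2. -/
/-- The broom: a path `u_1, …, u_l` on `l` vertices (indexed `0, …, l-1`)
with `m` pendant vertices attached to the endpoint `u_l`. -/
def broomGraph (l m : ℕ) : SimpleGraph (Fin l ⊕ Fin m) :=
  SimpleGraph.fromRel (fun a b =>
    match a, b with
    | Sum.inl i, Sum.inl j => (i : ℕ) + 1 = (j : ℕ)
    | Sum.inl i, Sum.inr _ => (i : ℕ) = l - 1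
    | _, _ => False)

section BroomAux


variable {l m : ℕ}

lemma badj_inl_inl {i j : Fin l} :
    (broomGraph l m).Adj (Sum.inl i) (Sum.inl j) ↔ ((i:ℕ)+1 = j ∨ (j:ℕ)+1 = i) := by
  unfold broomGraph
  rw [SimpleGraph.fromRel_adj]
  simp only [ne_eq, Sum.inl.injEq]
  constructor
  · rintro ⟨h, h2⟩; exact h2
  · intro h
    refine ⟨fun e => ?_, h⟩
    subst e
    rcases h with h | h <;> omega

lemma badj_inl_inr {i : Fin l} {a : Fin m} :
    (broomGraph l m).Adj (Sum.inl i) (Sum.inr a) ↔ (i:ℕ) = l - 1 := by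
  unfold broomGraph
  rw [SimpleGraph.fromRel_adj]
  simp

lemma badj_inr_inr {a b : Fin m} :
    ¬ (broomGraph l m).Adj (Sum.inr a) (Sum.inr b) := by
  unfold broomGraph
  rw [SimpleGraph.fromRel_adj]
  simp

/-- potential function -/
def fv (l m : ℕ) : Fin l ⊕ Fin m → ℕ := Sum.elim (fun i => (i:ℕ)) (fun _ => l)

lemma adj_fv (hl : 1 ≤ l) {u v : Fin l ⊕ Fin m}
    (h : (broomGraph l m).Adj u v) : fv l m v ≤ fv l m u + 1 ∧ fv l m u ≤ fv l m v + 1 := by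
  cases u with
  | inl i =>
    cases v with
    | inl j => rw [badj_inl_inl] at h; simp only [fv, Sum.elim_inl]; omega
    | inr a => rw [badj_inl_inr] at h; simp only [fv, Sum.elim_inl, Sum.elim_inr]; omega
  | inr a =>
    cases v with
    | inl j =>
      have h2 := badj_inl_inr.mp h.symm
      simp only [fv, Sum.elim_inl, Sum.elim_inr]; omega
    | inr b => exact absurd h badj_inr_inr

lemma walk_fv (hl : 1 ≤ l) {u v : Fin l ⊕ Fin m} (p : (broomGraph l m).Walk u v) :
    fv l m v ≤ fv l m u + p.length ∧ fv l m u ≤ fv l m v + p.length := by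
  induction p with
  | nil => simp
  | cons h p ih =>
    have := adj_fv hl h
    simp only [SimpleGraph.Walk.length_cons]
    omega

lemma fv_le_dist (hl : 1 ≤ l) {u v : Fin l ⊕ Fin m}
    (hr : (broomGraph l m).Reachable u v) :
    fv l m v ≤ fv l m u + (broomGraph l m).dist u v ∧
      fv l m u ≤ fv l m v + (broomGraph l m).dist u v := by
  obtain ⟨p, hp⟩ := hr.exists_walk_length_eq_dist
  have := walk_fv hl p
  omega

lemma reach_last (hl : 1 ≤ l) : ∀ (k : ℕ) (i : Fin l), (i:ℕ) + k = l - 1 →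
    (broomGraph l m).Reachable (Sum.inl i) (Sum.inl ⟨l-1, by omega⟩)
  | 0, i, h => by
      have : i = ⟨l-1, by omega⟩ := Fin.ext (by simp; omega)
      rw [this]
  | (k+1), i, h => by
      have hi1 : (i:ℕ)+1 < l := by omega
      have hadj : (broomGraph l m).Adj (Sum.inl i) (Sum.inl ⟨(i:ℕ)+1, hi1⟩) :=
        badj_inl_inl.mpr (Or.inl rfl)
      exact hadj.reachable.trans (reach_last hl k ⟨(i:ℕ)+1, hi1⟩ (by simp; omega))

lemma broom_conn (hl : 1 ≤ l) : (broomGraph l m).Connected := by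
  rw [SimpleGraph.connected_iff]
  refine ⟨fun u v => ?_, ⟨Sum.inl ⟨l-1, by omega⟩⟩⟩
  have key : ∀ w : Fin l ⊕ Fin m,
      (broomGraph l m).Reachable w (Sum.inl ⟨l-1, by omega⟩) := by
    intro w
    cases w with
    | inl i =>
      have := i.isLt
      exact reach_last hl (l - 1 - i) i (by omega)
    | inr a =>
      exact ((badj_inl_inr (i := ⟨l-1, by omega⟩)).mpr rfl).reachable.symm
  exact (key u).trans (key v).symm

lemma dist_inl_le (hl : 1 ≤ l) : ∀ (k : ℕ) (i j : Fin l), (j:ℕ) = i + k →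
    (broomGraph l m).dist (Sum.inl i) (Sum.inl j) ≤ k
  | 0, i, j, h => by
      have : i = j := Fin.ext (by omega)
      rw [this, SimpleGraph.dist_self]
  | (k+1), i, j, h => by
      have hj := j.isLt
      have hi1 : (i:ℕ)+1 < l := by omega
      have hadj : (broomGraph l m).Adj (Sum.inl i) (Sum.inl ⟨(i:ℕ)+1, hi1⟩) :=
        badj_inl_inl.mpr (Or.inl rfl)
      have h1 : (broomGraph l m).dist (Sum.inl i) (Sum.inl ⟨(i:ℕ)+1, hi1⟩) ≤ 1 :=
        le_of_eq (SimpleGraph.dist_eq_one_iff_adj.mpr hadj)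
      have h2 := dist_inl_le hl k ⟨(i:ℕ)+1, hi1⟩ j (by simp; omega)
      have h3 := (broom_conn (m := m) hl).dist_triangle
        (u := Sum.inl i) (v := Sum.inl ⟨(i:ℕ)+1, hi1⟩) (w := Sum.inl j)
      omega

lemma dist_inl_inl (hl : 1 ≤ l) (i j : Fin l) (hij : (i:ℕ) ≤ j) :
    (broomGraph l m).dist (Sum.inl i) (Sum.inl j) = (j:ℕ) - i := by
  have hle := dist_inl_le (m := m) hl ((j:ℕ) - i) i j (by omega)
  have hlow := fv_le_dist hl ((broom_conn (m := m) hl).preconnected (Sum.inl i) (Sum.inl j))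
  simp only [fv, Sum.elim_inl] at hlow
  omega

lemma dist_inl_inr (hl : 1 ≤ l) (i : Fin l) (a : Fin m) :
    (broomGraph l m).dist (Sum.inl i) (Sum.inr a) = l - i := by
  have hi := i.isLt
  have h1 := dist_inl_le (m := m) hl (l-1-i) i ⟨l-1, by omega⟩ (by simp; omega)
  have hadj : (broomGraph l m).Adj (Sum.inl (⟨l-1, by omega⟩ : Fin l)) (Sum.inr a) :=
    badj_inl_inr.mpr rfl
  have h2 : (broomGraph l m).dist (Sum.inl (⟨l-1, by omega⟩ : Fin l)) (Sum.inr a) ≤ 1 :=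
    le_of_eq (SimpleGraph.dist_eq_one_iff_adj.mpr hadj)
  have h3 := (broom_conn (m := m) hl).dist_triangle
    (u := Sum.inl i) (v := Sum.inl ⟨l-1, by omega⟩) (w := Sum.inr a)
  have hlow := fv_le_dist hl ((broom_conn (m := m) hl).preconnected (Sum.inl i) (Sum.inr a))
  simp only [fv, Sum.elim_inl, Sum.elim_inr] at hlow
  omega

lemma dist_inr_inr (hl : 1 ≤ l) (a b : Fin m) (hab : a ≠ b) :
    (broomGraph l m).dist (Sum.inr a) (Sum.inr b) = 2 := by
  have hadj1 : (broomGraph l m).Adj (Sum.inr a) (Sum.inl (⟨l-1, by omega⟩ : Fin l)) :=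
    (badj_inl_inr.mpr rfl).symm
  have hadj2 : (broomGraph l m).Adj (Sum.inl (⟨l-1, by omega⟩ : Fin l)) (Sum.inr b) :=
    badj_inl_inr.mpr rfl
  have h1 : (broomGraph l m).dist (Sum.inr a) (Sum.inl (⟨l-1, by omega⟩ : Fin l)) ≤ 1 :=
    le_of_eq (SimpleGraph.dist_eq_one_iff_adj.mpr hadj1)
  have h2 : (broomGraph l m).dist (Sum.inl (⟨l-1, by omega⟩ : Fin l)) (Sum.inr b) ≤ 1 :=
    le_of_eq (SimpleGraph.dist_eq_one_iff_adj.mpr hadj2)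
  have h3 := (broom_conn (m := m) hl).dist_triangle
    (u := Sum.inr a) (v := Sum.inl ⟨l-1, by omega⟩) (w := Sum.inr b)
  have hne : (broomGraph l m).dist (Sum.inr a) (Sum.inr b) ≠ 0 := by
    intro h
    have := ((broom_conn (m := m) hl).dist_eq_zero_iff).mp h
    simp at this
    exact hab this
  have hne1 : (broomGraph l m).dist (Sum.inr a) (Sum.inr b) ≠ 1 := by
    intro h
    exact badj_inr_inr (SimpleGraph.dist_eq_one_iff_adj.mp h)
  omega


lemma sumT : ∀ n : ℕ, 2 * (∑ i ∈ Finset.range n, (n - i)) = n^2 + n := by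
  intro n
  induction n with
  | zero => simp
  | succ n ih =>
    have h1 : (∑ i ∈ Finset.range (n+1), (n+1-i))
        = (∑ i ∈ Finset.range n, (n - i)) + (n + 1) := by
      rw [Finset.sum_range_succ]
      have h : ∀ i ∈ Finset.range n, n + 1 - i = (n - i) + 1 := by
        intro i hi; rw [Finset.mem_range] at hi; omega
      rw [Finset.sum_congr rfl h, Finset.sum_add_distrib, Finset.sum_const, Finset.card_range]
      simp; omega
    rw [h1]
    zify at ih ⊢
    linear_combination ih

lemma sumAbs : ∀ n : ℕ,
    3 * (∑ i ∈ Finset.range n, ∑ j ∈ Finset.range n, (max i j - min i j)) = n^3 - n := by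
  intro n
  induction n with
  | zero => simp
  | succ n ih =>
    have hrow : ∀ i ∈ Finset.range n,
        (∑ j ∈ Finset.range (n+1), (max i j - min i j))
        = (∑ j ∈ Finset.range n, (max i j - min i j)) + (n - i) := by
      intro i hi; rw [Finset.mem_range] at hi
      rw [Finset.sum_range_succ]
      congr 1
      omega
    have hlast : (∑ j ∈ Finset.range (n+1), (max n j - min n j))
        = (∑ j ∈ Finset.range n, (n - j)) := by
      rw [Finset.sum_range_succ]
      have h : ∀ j ∈ Finset.range n, (max n j - min n j) = n - j := by
        intro j hj; rw [Finset.mem_range] at hj; omega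
      rw [Finset.sum_congr rfl h]
      simp
    rw [Finset.sum_range_succ, Finset.sum_congr rfl hrow, hlast, Finset.sum_add_distrib]
    have hT := sumT n
    have hn3 : n ≤ n^3 := Nat.le_self_pow (by norm_num) n
    have hn3' : n+1 ≤ (n+1)^3 := Nat.le_self_pow (by norm_num) (n+1)
    zify [hn3, hn3'] at ih ⊢
    zify at hT
    linear_combination ih + 3*hT

lemma ex6 : ∀ n : ℕ, ∃ k, n^3 = n + 6*k := by
  intro n
  induction n with
  | zero => exact ⟨0, rfl⟩
  | succ n ih =>
    obtain ⟨k, hk⟩ := ih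
    obtain ⟨t, ht⟩ := Nat.even_mul_succ_self n
    refine ⟨k + t, ?_⟩
    have hk' : ((n:ℤ))^3 = n + 6*k := by exact_mod_cast hk
    have ht' : ((n:ℤ))*(n+1) = t + t := by exact_mod_cast ht
    have h : (((n+1):ℕ):ℤ)^3 = ((n+1):ℕ) + 6*((k:ℤ)+t) := by
      push_cast
      linear_combination hk' + 3*ht'
    exact_mod_cast h

end BroomAux

/-- the Wiener index of the broom equals
`(l^3 - l)/6 + m^2 + (l-1)·m + m·(l^2 - l)/2`. -/
theorem wienerIndex_broom (l m : ℕ) (hl : 1 ≤ l) :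
    wienerIndex (broomGraph l m) =
      (l ^ 3 - l) / 6 + m ^ 2 + (l - 1) * m + m * ((l ^ 2 - l) / 2) := by
  classical
  set T : ℕ := ∑ i ∈ Finset.range l, (l - i) with hTdef
  set A : ℕ := ∑ i ∈ Finset.range l, ∑ j ∈ Finset.range l, (max i j - min i j) with hAdef
  have hdll : ∀ i j : Fin l, (broomGraph l m).dist (Sum.inl i) (Sum.inl j)
      = max (i:ℕ) (j:ℕ) - min (i:ℕ) (j:ℕ) := by
    intro i j
    rcases le_total (i:ℕ) (j:ℕ) with h | h
    · rw [dist_inl_inl hl i j h]; omega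
    · rw [SimpleGraph.dist_comm, dist_inl_inl hl j i h]; omega
  have hA : (∑ i : Fin l, ∑ j : Fin l, (broomGraph l m).dist (Sum.inl i) (Sum.inl j)) = A := by
    simp only [hdll]
    calc (∑ i : Fin l, ∑ j : Fin l, (max (i:ℕ) (j:ℕ) - min (i:ℕ) (j:ℕ)))
        = ∑ i : Fin l, ∑ j ∈ Finset.range l, (max (i:ℕ) j - min (i:ℕ) j) := by
          refine Finset.sum_congr rfl fun i _ => ?_
          exact Fin.sum_univ_eq_sum_range (fun j => max (i:ℕ) j - min (i:ℕ) j) l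
      _ = A :=
          Fin.sum_univ_eq_sum_range (fun i => ∑ j ∈ Finset.range l, (max i j - min i j)) l
  have hinner : ∀ i : Fin l,
      (∑ a : Fin m, (broomGraph l m).dist (Sum.inl i) (Sum.inr a)) = m * (l - (i:ℕ)) := by
    intro i
    simp [dist_inl_inr hl, Finset.sum_const, Finset.card_univ, mul_comm]
  have hB : (∑ i : Fin l, ∑ a : Fin m, (broomGraph l m).dist (Sum.inl i) (Sum.inr a))
      = m * T := by
    simp only [hinner]
    rw [← Finset.mul_sum]
    congr 1
    exact Fin.sum_univ_eq_sum_range (fun i => l - i) l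
  have hB' : (∑ a : Fin m, ∑ i : Fin l, (broomGraph l m).dist (Sum.inr a) (Sum.inl i))
      = m * T := by
    have h1 : ∀ a : Fin m,
        (∑ i : Fin l, (broomGraph l m).dist (Sum.inr a) (Sum.inl i)) = T := by
      intro a
      simp only [SimpleGraph.dist_comm (G := broomGraph l m) (u := Sum.inr a)]
      calc (∑ i : Fin l, (broomGraph l m).dist (Sum.inl i) (Sum.inr a))
          = ∑ i : Fin l, (l - (i:ℕ)) := by
            refine Finset.sum_congr rfl fun i _ => dist_inl_inr hl i a
        _ = T := Fin.sum_univ_eq_sum_range (fun i => l - i) l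
    simp [h1, Finset.sum_const, Finset.card_univ, mul_comm]
  have hbb : ∀ a : Fin m,
      (∑ b : Fin m, (broomGraph l m).dist (Sum.inr a) (Sum.inr b)) = 2 * (m - 1) := by
    intro a
    have hm : 0 < m := a.pos
    have h1 : ∀ b : Fin m, (broomGraph l m).dist (Sum.inr a) (Sum.inr b)
        = (if a = b then 0 else 2) := by
      intro b
      by_cases h : a = b
      · subst h; simp [SimpleGraph.dist_self]
      · simp [h, dist_inr_inr hl a b h]
    simp only [h1]
    have h2 : (∑ b : Fin m, if a = b then (0:ℕ) else 2)
        + (∑ b : Fin m, if a = b then (2:ℕ) else 0) = ∑ b : Fin m, 2 := by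
      rw [← Finset.sum_add_distrib]
      refine Finset.sum_congr rfl fun b _ => ?_
      by_cases h : a = b <;> simp [h]
    have h3 : (∑ b : Fin m, if a = b then (2:ℕ) else 0) = 2 := by
      simp [Finset.sum_ite_eq]
    have h4 : (∑ b : Fin m, (2:ℕ)) = 2 * m := by
      simp [Finset.sum_const, Finset.card_univ, mul_comm]
    omega
  have hC : (∑ a : Fin m, ∑ b : Fin m, (broomGraph l m).dist (Sum.inr a) (Sum.inr b))
      = m * (2 * (m-1)) := by
    simp [hbb, Finset.sum_const, Finset.card_univ, mul_comm]
  rw [wienerIndex]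
  simp only [Fintype.sum_sum_type]
  rw [Finset.sum_add_distrib, Finset.sum_add_distrib, hA, hB, hB', hC]
  -- now pure arithmetic
  obtain ⟨k6, hk6⟩ := ex6 l
  have h3A := sumAbs l
  have h2T := sumT l
  rw [← hAdef] at h3A
  rw [← hTdef] at h2T
  have hle3 : l ≤ l^3 := Nat.le_self_pow (by norm_num) l
  have hle2 : l ≤ l^2 := Nat.le_self_pow (by norm_num) l
  obtain ⟨c3, hc3⟩ : ∃ c, l^3 = c := ⟨_, rfl⟩
  obtain ⟨c2, hc2⟩ : ∃ c, l^2 = c := ⟨_, rfl⟩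
  rw [hc3] at h3A hk6 hle3 ⊢
  rw [hc2] at h2T hle2 ⊢
  have hA2 : A = 2 * k6 := by omega
  set k2 : ℕ := (c2 - l) / 2 with hk2def
  have hTk : T = k2 + l := by omega
  have e1 : (c3 - l) / 6 = k6 := by omega
  have e2 : (c2 - l) / 2 = k2 := rfl
  rw [hA2, hTk, e1]
  rcases Nat.exists_eq_add_of_le hl with ⟨l', rfl⟩
  rcases Nat.eq_zero_or_pos m with hm | hm
  · subst hm; simp
  rcases Nat.exists_eq_add_of_le hm with ⟨m', rfl⟩
  have h1m : (1+m') - 1 = m' := by omega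
  have h1l : (1+l') - 1 = l' := by omega
  rw [h1m, h1l]
  exact Nat.div_eq_of_eq_mul_left (by norm_num) (by ring)
end

section
/- If G is an extremal graph among bipartite unicyclic graphs with (p,q)-partition (1 < p < q), then all pendant vertices of G belong to the larger part Q of the bipartition. -/
/-- `G` is bipartite with parts of sizes `p` and `q`: there is a set of vertices
of size `p`, with complement of size `q`, such that every edge goes between the
set and its complement. -/
def hasBipartition {V : Type*} [Fintype V] [DecidableEq V]
    (G : SimpleGraph V) (p q : ℕ) : Prop :=
  ∃ s : Finset V, (∀ a b, G.Adj a b → (a ∈ s ↔ b ∉ s)) ∧ s.card = p ∧ sᶜ.card = q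

/-- `G` is unicyclic: connected and containing exactly one cycle; equivalently
(for a finite graph), connected with exactly as many edges as vertices. -/
def IsUnicyclic {V : Type*} [Fintype V] (G : SimpleGraph V) : Prop :=
  G.Connected ∧ Nat.card G.edgeSet = Fintype.card V

/-!
Let `v ∈ P` be a pendant vertex with neighbour `u`. The degrees in `Q` add up to the number of
edges `n = p + q < 2q`, so `Q` contains a pendant vertex `w` as well, with neighbour `x ∈ P`.

Moving a pendant vertex `v` from its neighbour `u` to a vertex `z` on the side of `u` keeps the
graph bipartite and unicyclic and leaves all distances between the other vertices unchanged, so it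
changes the Wiener index by exactly the change of the transmission `T(v)`. Maximality of `W(G)`
therefore gives `T(z) + n ≤ T(v) + d(z, v) + 1`. Adding this for the moves of `v` to `w` and of
`w` to `v` gives `n ≤ d(v, w) + 1 = d(u, x) + 3`. But a geodesic from `u` to `x` avoids `v` and
`w`; if its vertices together with `v` and `w` were all the vertices, every edge would be a geodesic
edge or one of the two pendant edges, leaving at most `n - 1` edges instead of `n`.
-/

namespace SimpleGraph

variable {V : Type*} {G H : SimpleGraph V} {a b c d u v w x z : V}

section Pendant

theorem adj_iff_of_neighborSet_eq_singleton (hv : G.neighborSet v = {u}) :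
    G.Adj v c ↔ c = u := by
  rw [← mem_neighborSet, hv, Set.mem_singleton_iff]

theorem adj_of_neighborSet_eq_singleton (hv : G.neighborSet v = {u}) : G.Adj v u :=
  (adj_iff_of_neighborSet_eq_singleton hv).mpr rfl

theorem eq_of_mem_edgeSet_of_neighborSet_eq_singleton {e : Sym2 V}
    (hv : G.neighborSet v = {u}) (he : e ∈ G.edgeSet) (hve : v ∈ e) : e = s(v, u) := by
  obtain ⟨y, rfl⟩ := Sym2.mem_iff_exists.mp hve
  rw [(adj_iff_of_neighborSet_eq_singleton hv).mp (show G.Adj v y from he)]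

theorem Walk.IsPath.notMem_support_of_neighborSet_eq_singleton {p : G.Walk a b}
    (hp : p.IsPath) (hv : G.neighborSet v = {u}) (ha : a ≠ v) (hb : b ≠ v) :
    v ∉ p.support := by
  intro hmem
  obtain ⟨i, rfl, hi⟩ := p.mem_support_iff_exists_getVert.mp hmem
  have hi0 : i ≠ 0 := by rintro rfl; exact ha p.getVert_zero.symm
  have hil : i ≠ p.length := by rintro rfl; exact hb p.getVert_length.symm
  -- both walk-neighbours of the interior vertex `v` would be `u`
  have hprev : p.getVert (i - 1) = u := by
    have hadj := p.adj_getVert_succ (i := i - 1) (by omega)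
    rw [Nat.sub_add_cancel (Nat.pos_of_ne_zero hi0)] at hadj
    exact (adj_iff_of_neighborSet_eq_singleton hv).mp hadj.symm
  have hnext : p.getVert (i + 1) = u :=
    (adj_iff_of_neighborSet_eq_singleton hv).mp (p.adj_getVert_succ (by omega))
  have := hp.getVert_injOn (by simp only [Set.mem_ofPred_eq]; omega)
    (by simp only [Set.mem_ofPred_eq]; omega) (hprev.trans hnext.symm)
  omega

theorem Connected.dist_eq_dist_add_one_of_neighborSet_eq_singleton (hG : G.Connected)
    (hv : G.neighborSet v = {u}) (hc : c ≠ v) : G.dist v c = G.dist u c + 1 := by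
  obtain ⟨p, hp⟩ := hG.exists_walk_length_eq_dist v c
  have hnil : ¬p.Nil := fun h => hc h.eq.symm
  have hsnd : p.snd = u := (adj_iff_of_neighborSet_eq_singleton hv).mp (p.adj_snd hnil)
  have hlower : G.dist u c ≤ p.tail.length := hsnd ▸ dist_le p.tail
  have hupper : G.dist v c ≤ G.dist v u + G.dist u c := hG.dist_triangle
  rw [dist_eq_one_iff_adj.mpr (adj_of_neighborSet_eq_singleton hv)] at hupper
  have := p.length_tail_add_one hnil
  omega

theorem Connected.card_le_two_of_neighborSet_eq_singleton [Fintype V] (hG : G.Connected)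
    (hv : G.neighborSet v = {u}) (hu : G.neighborSet u = {v}) : Fintype.card V ≤ 2 := by
  classical
  have hsub : (Finset.univ : Finset V) ⊆ {v, u} := by
    intro c _
    by_contra hc
    simp only [Finset.mem_insert, Finset.mem_singleton, not_or] at hc
    have h1 := hG.dist_eq_dist_add_one_of_neighborSet_eq_singleton hv hc.1
    have h2 := hG.dist_eq_dist_add_one_of_neighborSet_eq_singleton hu hc.2
    omega
  exact (Finset.card_le_card hsub).trans Finset.card_le_two

end Pendant

section AgreeOffPendant

theorem exists_walk_length_eq_dist_of_adj_imp (hG : G.Connected) (hv : G.neighborSet v = {u})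
    (hGH : ∀ a b, a ≠ v → b ≠ v → G.Adj a b → H.Adj a b) (ha : a ≠ v) (hb : b ≠ v) :
    ∃ q : H.Walk a b, q.length = G.dist a b := by
  obtain ⟨p, hp⟩ := hG.exists_walk_length_eq_dist a b
  have hvp := (p.isPath_of_length_eq_dist hp).notMem_support_of_neighborSet_eq_singleton hv ha hb
  refine ⟨p.transfer H fun e he => ?_, by rw [Walk.length_transfer, hp]⟩
  induction e with
  | _ c d =>
    exact hGH c d (ne_of_mem_of_not_mem (p.fst_mem_support_of_mem_edges he) hvp)
      (ne_of_mem_of_not_mem (p.snd_mem_support_of_mem_edges he) hvp) (p.adj_of_mem_edges he)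

theorem connected_of_adj_imp (hG : G.Connected) (hv : G.neighborSet v = {u})
    (hGH : ∀ a b, a ≠ v → b ≠ v → G.Adj a b → H.Adj a b)
    (hvz : H.Adj v z) : H.Connected := by
  have hz : ∀ a, H.Reachable a z := by
    intro a
    rcases eq_or_ne a v with rfl | ha
    · exact hvz.reachable
    · obtain ⟨q, -⟩ := exists_walk_length_eq_dist_of_adj_imp hG hv hGH ha hvz.ne.symm
      exact q.reachable
  have : Nonempty V := ⟨v⟩
  exact ⟨fun a b => (hz a).trans (hz b).symm⟩

theorem dist_eq_of_adj_iff (hG : G.Connected) (hv : G.neighborSet v = {u}) (hH : H.Connected)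
    (hvH : H.neighborSet v = {z})
    (hGH : ∀ a b, a ≠ v → b ≠ v → (G.Adj a b ↔ H.Adj a b)) (ha : a ≠ v)
    (hb : b ≠ v) :
    H.dist a b = G.dist a b := by
  obtain ⟨q, hq⟩ := exists_walk_length_eq_dist_of_adj_imp hG hv
    (fun a b ha hb => (hGH a b ha hb).mp) ha hb
  obtain ⟨p, hp⟩ := exists_walk_length_eq_dist_of_adj_imp hH hvH
    (fun a b ha hb => (hGH a b ha hb).mpr) ha hb
  exact le_antisymm (hq ▸ dist_le q) (hp ▸ dist_le p)

end AgreeOffPendant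

section Transmission

variable [Fintype V]

theorem transmission_eq_sum_erase_add [DecidableEq V] (G : SimpleGraph V) (z v : V) :
    transmission G z = ∑ c ∈ Finset.univ.erase v, G.dist z c + G.dist z v :=
  (Finset.sum_erase_add _ _ (Finset.mem_univ v)).symm

theorem Connected.transmission_add_two_of_neighborSet_eq_singleton (hG : G.Connected)
    (hv : G.neighborSet v = {u}) : transmission G v + 2 = transmission G u + Fintype.card V := by
  classical
  have hrow : ∑ c ∈ Finset.univ.erase v, G.dist v c =
      ∑ c ∈ Finset.univ.erase v, G.dist u c + (Fintype.card V - 1) := by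
    rw [Finset.sum_congr rfl fun c hc =>
        hG.dist_eq_dist_add_one_of_neighborSet_eq_singleton hv (Finset.ne_of_mem_erase hc),
      Finset.sum_add_distrib, Finset.sum_const, smul_eq_mul, mul_one,
      Finset.card_erase_of_mem (Finset.mem_univ v), Finset.card_univ]
  have hn : 0 < Fintype.card V := Fintype.card_pos_iff.mpr ⟨v⟩
  rw [transmission_eq_sum_erase_add G v v, transmission_eq_sum_erase_add G u v, hrow, dist_self,
    dist_comm, dist_eq_one_iff_adj.mpr (adj_of_neighborSet_eq_singleton hv)]
  omega

theorem sum_sum_dist_eq [DecidableEq V] (G : SimpleGraph V) (v : V) :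
    ∑ a, ∑ b, G.dist a b =
      ∑ a ∈ Finset.univ.erase v, ∑ b ∈ Finset.univ.erase v, G.dist a b +
        2 * transmission G v := by
  have hcol : ∑ a ∈ Finset.univ.erase v, G.dist a v = transmission G v := by
    simp_rw [dist_comm (u := _) (v := v)]
    rw [transmission_eq_sum_erase_add G v v, dist_self, add_zero]
  rw [← Finset.sum_erase_add _ _ (Finset.mem_univ v)]
  simp_rw [← Finset.sum_erase_add _ _ (Finset.mem_univ v)]
  rw [Finset.sum_add_distrib, hcol, ← transmission_eq_sum_erase_add]
  ring

theorem transmission_add_dist_eq_of_dist_eq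
    (hoff : ∀ a b, a ≠ v → b ≠ v → H.dist a b = G.dist a b) (hz : z ≠ v) :
    transmission H z + G.dist z v = transmission G z + H.dist z v := by
  classical
  rw [transmission_eq_sum_erase_add H z v, transmission_eq_sum_erase_add G z v,
    Finset.sum_congr rfl fun c hc => hoff z c hz (Finset.ne_of_mem_erase hc)]
  ring

theorem wienerIndex_lt_of_transmission_lt
    (hoff : ∀ a b, a ≠ v → b ≠ v → H.dist a b = G.dist a b)
    (hT : transmission G v < transmission H v) : wienerIndex G < wienerIndex H := by
  classical
  have hcore : ∑ a ∈ Finset.univ.erase v, ∑ b ∈ Finset.univ.erase v, H.dist a b =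
      ∑ a ∈ Finset.univ.erase v, ∑ b ∈ Finset.univ.erase v, G.dist a b :=
    Finset.sum_congr rfl fun a ha => Finset.sum_congr rfl fun b hb =>
      hoff a b (Finset.ne_of_mem_erase ha) (Finset.ne_of_mem_erase hb)
  -- the doubled sums differ by `2 * (T_H(v) - T_G(v)) ≥ 2`, which survives the division by `2`
  unfold wienerIndex
  rw [sum_sum_dist_eq G v, sum_sum_dist_eq H v, hcore]
  omega

end Transmission

section Reattach

def reattach (G : SimpleGraph V) (v u z : V) : SimpleGraph V :=
  G.deleteEdges {s(v, u)} ⊔ edge v z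

theorem reattach_adj_iff_of_ne (ha : a ≠ v) (hb : b ≠ v) :
    (G.reattach v u z).Adj a b ↔ G.Adj a b := by
  simp [reattach, edge_adj, ha, hb]

theorem neighborSet_reattach (hv : G.neighborSet v = {u}) (hvz : v ≠ z) :
    (G.reattach v u z).neighborSet v = {z} := by
  ext c
  simp only [mem_neighborSet, reattach, sup_adj, deleteEdges_adj, edge_adj,
    adj_iff_of_neighborSet_eq_singleton hv, Set.mem_singleton_iff]
  grind

theorem card_edgeSet_reattach [Finite V] (hv : G.neighborSet v = {u}) (hvz : v ≠ z) :
    Nat.card (G.reattach v u z).edgeSet = Nat.card G.edgeSet := by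
  have hnew : s(v, z) ∉ G.edgeSet \ {s(v, u)} := fun ⟨hvz', hne⟩ =>
    hne (eq_of_mem_edgeSet_of_neighborSet_eq_singleton hv hvz' (Sym2.mem_mk_left v z))
  rw [Nat.card_coe_set_eq, Nat.card_coe_set_eq, reattach, edgeSet_sup, edgeSet_deleteEdges,
    edgeSet_edge_of_ne hvz, Set.union_singleton, Set.ncard_insert_of_notMem hnew,
    Set.ncard_sdiff_singleton_add_one (show s(v, u) ∈ G.edgeSet from
      adj_of_neighborSet_eq_singleton hv)]

theorem reattach_adj_imp_mem_iff {s : Finset V} (hs : ∀ a b, G.Adj a b → (a ∈ s ↔ b ∉ s))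
    (hvz : v ∈ s ↔ z ∉ s) :
    ∀ a b, (G.reattach v u z).Adj a b → (a ∈ s ↔ b ∉ s) := by
  intro a b hab
  rcases hab with hab | hab
  · exact hs a b hab.1
  · obtain ⟨⟨rfl, rfl⟩ | ⟨rfl, rfl⟩, -⟩ := (edge_adj ..).mp hab
    · exact hvz
    · tauto

end Reattach

theorem isUnicyclic_reattach [Fintype V] (hG : IsUnicyclic G) (hv : G.neighborSet v = {u})
    (hvz : v ≠ z) : IsUnicyclic (G.reattach v u z) := by
  have hvH := neighborSet_reattach hv hvz
  refine ⟨connected_of_adj_imp hG.1 hv (fun a b ha hb => (reattach_adj_iff_of_ne ha hb).mpr)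
    (adj_of_neighborSet_eq_singleton hvH), ?_⟩
  rw [card_edgeSet_reattach hv hvz, hG.2]

theorem transmission_add_card_le_of_wienerIndex_reattach_le [Fintype V] (hG : G.Connected)
    (hv : G.neighborSet v = {u}) (hvz : v ≠ z)
    (hW : wienerIndex (G.reattach v u z) ≤ wienerIndex G) :
    transmission G z + Fintype.card V ≤ transmission G v + G.dist z v + 1 := by
  set H := G.reattach v u z
  have hvH : H.neighborSet v = {z} := neighborSet_reattach hv hvz
  have hoffAdj : ∀ a b, a ≠ v → b ≠ v → (G.Adj a b ↔ H.Adj a b) :=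
    fun a b ha hb => (reattach_adj_iff_of_ne ha hb).symm
  have hH : H.Connected := connected_of_adj_imp hG hv (fun a b ha hb => (hoffAdj a b ha hb).mp)
    (adj_of_neighborSet_eq_singleton hvH)
  have hoff : ∀ a b, a ≠ v → b ≠ v → H.dist a b = G.dist a b :=
    fun a b ha hb => dist_eq_of_adj_iff hG hv hH hvH hoffAdj ha hb
  have hTv : transmission H v ≤ transmission G v :=
    not_lt.mp fun h => (wienerIndex_lt_of_transmission_lt hoff h).not_ge hW
  have hTz := transmission_add_dist_eq_of_dist_eq hoff hvz.symm
  have hTvz := hH.transmission_add_two_of_neighborSet_eq_singleton hvH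
  have hzv : H.dist z v = 1 := dist_eq_one_iff_adj.mpr (adj_of_neighborSet_eq_singleton hvH).symm
  omega

section Geodesic

theorem Walk.dist_getVert_of_length_eq_dist {p : G.Walk a b} (hp : p.length = G.dist a b)
    {i : ℕ} (hi : i ≤ p.length) : G.dist a (p.getVert i) = i := by
  have hstart : G.dist a (p.getVert i) ≤ i := by
    simpa [Walk.take_length, hi] using dist_le (p.take i)
  have hend : G.dist (p.getVert i) b ≤ p.length - i := by
    simpa [Walk.drop_length] using dist_le (p.drop i)
  have := (p.take i).reachable.dist_triangle_left b
  omega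

theorem Walk.mk_mem_edges_of_length_eq_dist {p : G.Walk a b} (hp : p.length = G.dist a b)
    (hc : c ∈ p.support) (hd : d ∈ p.support) (hcd : G.Adj c d) : s(c, d) ∈ p.edges := by
  obtain ⟨i, rfl, hi⟩ := p.mem_support_iff_exists_getVert.mp hc
  obtain ⟨j, rfl, hj⟩ := p.mem_support_iff_exists_getVert.mp hd
  have hij : i ≠ j := by rintro rfl; exact hcd.ne rfl
  rw [Walk.mk_mem_edges_iff_exists]
  rcases hcd.diff_dist_adj (u := a) with h | h | h <;>
    rw [p.dist_getVert_of_length_eq_dist hp hi, p.dist_getVert_of_length_eq_dist hp hj] at h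
  · exact absurd h.symm hij
  · exact ⟨i, by omega, by rw [h]⟩
  · exact ⟨j, by omega, by rw [h, Nat.sub_add_cancel (by omega), Sym2.eq_swap]⟩

end Geodesic

theorem Walk.card_edgeSet_le_of_forall_mem_support {p : G.Walk u x}
    (hp : p.length = G.dist u x) (hv : G.neighborSet v = {u}) (hw : G.neighborSet w = {x})
    (hsupp : ∀ c, c ≠ v → c ≠ w → c ∈ p.support) :
    Nat.card G.edgeSet ≤ G.dist u x + 2 := by
  classical
  set F := insert s(v, u) (insert s(w, x) p.edges.toFinset)
  have hsub : G.edgeSet ⊆ F := by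
    intro e he
    simp only [F, Finset.coe_insert, Set.mem_insert_iff, List.coe_toFinset, Set.mem_ofPred_eq]
    by_cases hve : v ∈ e
    · exact .inl (eq_of_mem_edgeSet_of_neighborSet_eq_singleton hv he hve)
    by_cases hwe : w ∈ e
    · exact .inr (.inl (eq_of_mem_edgeSet_of_neighborSet_eq_singleton hw he hwe))
    induction e with
    | _ c d =>
      simp only [Sym2.mem_iff, not_or] at hve hwe
      exact .inr (.inr (p.mk_mem_edges_of_length_eq_dist hp
        (hsupp c (Ne.symm hve.1) (Ne.symm hwe.1)) (hsupp d (Ne.symm hve.2) (Ne.symm hwe.2)) he))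
  calc Nat.card G.edgeSet = G.edgeSet.ncard := Nat.card_coe_set_eq _
    _ ≤ F.card := by
      rw [← Set.ncard_coe_finset]; exact Set.ncard_le_ncard hsub F.finite_toSet
    _ ≤ p.edges.toFinset.card + 2 := by
      have h1 : F.card ≤ _ := Finset.card_insert_le _ _
      have h2 := Finset.card_insert_le s(w, x) p.edges.toFinset
      omega
    _ ≤ G.dist u x + 2 := by
      have := p.edges.toFinset_card_le
      rw [Walk.length_edges, hp] at this
      omega

theorem Connected.dist_add_two_le_card [Fintype V] (hG : G.Connected)
    (hE : Fintype.card V ≤ Nat.card G.edgeSet) (hV : 3 ≤ Fintype.card V)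
    (hv : G.neighborSet v = {u}) (hw : G.neighborSet w = {x}) (hvw : v ≠ w) :
    G.dist v w + 2 ≤ Fintype.card V := by
  classical
  have hwu : w ≠ u := by
    rintro rfl
    have hvx : v = x := (adj_iff_of_neighborSet_eq_singleton hw).mp
      (adj_of_neighborSet_eq_singleton hv).symm
    have := hG.card_le_two_of_neighborSet_eq_singleton hv (hvx ▸ hw)
    omega
  have hvx : v ≠ x := fun h => hwu ((adj_iff_of_neighborSet_eq_singleton hv).mp
    (h ▸ adj_of_neighborSet_eq_singleton hw).symm)
  have hdist : G.dist v w = G.dist u x + 2 := by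
    rw [hG.dist_eq_dist_add_one_of_neighborSet_eq_singleton hv hvw.symm, dist_comm,
      hG.dist_eq_dist_add_one_of_neighborSet_eq_singleton hw hwu.symm, dist_comm]
  obtain ⟨p, hp⟩ := hG.exists_walk_length_eq_dist u x
  have hpath := p.isPath_of_length_eq_dist hp
  have hvp := hpath.notMem_support_of_neighborSet_eq_singleton hv
    (adj_of_neighborSet_eq_singleton hv).ne.symm hvx.symm
  have hwp := hpath.notMem_support_of_neighborSet_eq_singleton hw hwu.symm
    (adj_of_neighborSet_eq_singleton hw).ne.symm
  set S := insert v (insert w p.support.toFinset)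
  have hS : S.card = G.dist u x + 3 := by
    rw [Finset.card_insert_of_notMem (by simp [hvw, hvp]),
      Finset.card_insert_of_notMem (by simpa), List.toFinset_card_of_nodup hpath.support_nodup,
      Walk.length_support, hp]
  have hSle := Finset.card_le_univ S
  by_contra! hlt
  have hSuniv : S = Finset.univ := Finset.eq_univ_of_card S (by omega)
  have := p.card_edgeSet_le_of_forall_mem_support hp hv hw fun c hcv hcw => by
    have hc : c ∈ S := hSuniv ▸ Finset.mem_univ c
    simpa [S, hcv, hcw] using hc
  omega

theorem IsBipartiteWith.exists_neighborSet_eq_singleton [Fintype V] [Nontrivial V]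
    {s t : Finset V} (hG : G.Connected) (h : G.IsBipartiteWith s t)
    (hE : Nat.card G.edgeSet < 2 * t.card) : ∃ w ∈ t, ∃ x, G.neighborSet w = {x} := by
  classical
  have hsum := isBipartiteWith_sum_degrees_eq_card_edges' h
  rw [edgeFinset_card, ← Nat.card_eq_fintype_card] at hsum
  obtain ⟨w, hwt, hdeg⟩ : ∃ w ∈ t, G.degree w < 2 := by
    by_contra! hge
    have := Finset.sum_le_sum hge
    rw [Finset.sum_const, smul_eq_mul] at this
    omega
  have hpos := hG.preconnected.degree_pos_of_nontrivial w
  obtain ⟨x, hx⟩ := Finset.card_eq_one.mp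
    (show (G.neighborFinset w).card = 1 by rw [card_neighborFinset_eq_degree]; omega)
  exact ⟨w, hwt, x, by rw [← coe_neighborFinset, hx, Finset.coe_singleton]⟩

theorem isBipartiteWith_compl [Fintype V] [DecidableEq V] {s : Finset V}
    (hs : ∀ a b, G.Adj a b → (a ∈ s ↔ b ∉ s)) : G.IsBipartiteWith s ↑sᶜ := by
  refine ⟨by rw [Finset.coe_compl]; exact disjoint_compl_right, fun a b hab => ?_⟩
  simp only [Finset.coe_compl, Set.mem_compl_iff, Finset.mem_coe]
  have := hs a b hab
  tauto

theorem transmission_add_card_le_of_forall_wienerIndex_le [Fintype V] [DecidableEq V]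
    {s : Finset V} {p q : ℕ}
    (hs : ∀ a b, G.Adj a b → (a ∈ s ↔ b ∉ s)) (hsp : s.card = p) (hsq : sᶜ.card = q)
    (huni : IsUnicyclic G)
    (hmax : ∀ H : SimpleGraph V, hasBipartition H p q → IsUnicyclic H →
      wienerIndex H ≤ wienerIndex G)
    (ha : G.neighborSet a = {b}) (hac : a ≠ c) (hc : c ∈ s ↔ b ∈ s) :
    transmission G c + Fintype.card V ≤ transmission G a + G.dist c a + 1 := by
  have hside : a ∈ s ↔ c ∉ s := by have := hs a b (adj_of_neighborSet_eq_singleton ha); tauto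
  exact transmission_add_card_le_of_wienerIndex_reattach_le huni.1 ha hac
    (hmax _ ⟨s, reattach_adj_imp_mem_iff hs hside, hsp, hsq⟩ (isUnicyclic_reattach huni ha hac))

end SimpleGraph

open SimpleGraph in
/-- in an extremal bipartite unicyclic graph with `(p,q)`-partition
(`1 < p < q`), all pendant vertices (vertices of degree 1) belong to the larger
part `Q`, i.e. no pendant vertex lies in the part of size `p`. -/
theorem extremal_pendants_in_larger_part (p q : ℕ) (hp : 1 < p) (hpq : p < q)
    (G : SimpleGraph (Fin (p + q))) (s : Finset (Fin (p + q)))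
    (hs : ∀ a b, G.Adj a b → (a ∈ s ↔ b ∉ s))
    (hsp : s.card = p) (hsq : sᶜ.card = q)
    (huni : IsUnicyclic G)
    (hmax : ∀ H : SimpleGraph (Fin (p + q)),
      hasBipartition H p q → IsUnicyclic H → wienerIndex H ≤ wienerIndex G) :
    ∀ v : Fin (p + q), Nat.card (G.neighborSet v) = 1 → v ∉ s := by
  intro v hdeg hvs
  have hn : Fintype.card (Fin (p + q)) = p + q := Fintype.card_fin _
  have : Nontrivial (Fin (p + q)) := Fin.nontrivial_iff_two_le.mpr (by omega)
  obtain ⟨u, hv⟩ := Set.ncard_eq_one.mp ((Nat.card_coe_set_eq _).symm.trans hdeg)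
  obtain ⟨w, hws, x, hw⟩ := (isBipartiteWith_compl hs).exists_neighborSet_eq_singleton huni.1
    (by rw [huni.2, hn, hsq]; omega)
  rw [Finset.mem_compl] at hws
  have hus : u ∉ s := (hs v u (adj_of_neighborSet_eq_singleton hv)).mp hvs
  have hxs : x ∈ s := by have := hs w x (adj_of_neighborSet_eq_singleton hw); tauto
  have hvw : v ≠ w := fun h => hws (h ▸ hvs)
  have hmove_vw := transmission_add_card_le_of_forall_wienerIndex_le hs hsp hsq huni hmax
    hv hvw (iff_of_false hws hus)
  have hmove_wv := transmission_add_card_le_of_forall_wienerIndex_le hs hsp hsq huni hmax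
    hw hvw.symm (iff_of_true hvs hxs)
  have hdist := huni.1.dist_add_two_le_card huni.2.ge (by omega) hv hw hvw
  rw [SimpleGraph.dist_comm] at hmove_vw
  omega
end
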